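/- arXiv:1903.10273 — 6 statements merged into one kernel-verified Lean document; each statement's English description precedes it below -/
import Mathlib

section
/- Let Θ be a Hermitian positive semidefinite k×k complex matrix of rank q, with unitary U such that U Θ U* = diag(μ₁,…,μ_q,0,…,0) with all μᵢ > 0. Let Λ : [0,2A) → Matrix (Fin k) (Fin k) ℂ be continuous with Λ(t) positive definite, converging as t → 2A to a positive definite matrix Λ̂. Define M(t) := Λ(t) + (2t/(A(2A−t))) · diag(μ₁,…,μ_q,0,…,0). Then lim_{t→2A} (2A−t)^q · det M(t) = 4^q μ₁⋯μ_q · det Λ̂₀, where Λ̂₀ is the lower-right (k−q)×(k−q) block of Λ̂. -/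
open Matrix Filter
open scoped ComplexOrder Topology

theorem card_lem (k q : ℕ) (hq : q ≤ k) :
    (Finset.univ.filter (fun i : Fin k => (i:ℕ) < q)).card = q := by
  have : Finset.univ.filter (fun i : Fin k => (i:ℕ) < q)
      = Finset.univ.map (Fin.castLEEmb hq) := by
    ext x
    simp only [Finset.mem_filter, Finset.mem_univ, true_and, Finset.mem_map]
    constructor
    · intro h; exact ⟨⟨x.1, h⟩, Fin.ext rfl⟩
    · rintro ⟨a, rfl⟩
      exact a.2
  rw [this, Finset.card_map, Finset.card_univ, Fintype.card_fin]

theorem stmt_6 (k q : ℕ) (hq : q ≤ k) (A : ℝ) (hA : 0 < A)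
    (Θ : Matrix (Fin k) (Fin k) ℂ) (hΘ : Θ.PosSemidef) (hrank : Θ.rank = q)
    (U : Matrix (Fin k) (Fin k) ℂ) (hU : U ∈ Matrix.unitaryGroup (Fin k) ℂ)
    (μ : Fin k → ℝ) (hμpos : ∀ i : Fin k, (i : ℕ) < q → 0 < μ i)
    (hμzero : ∀ i : Fin k, q ≤ (i : ℕ) → μ i = 0)
    (hdiag : U * Θ * star U = Matrix.diagonal fun i => (μ i : ℂ))
    (Λ : ℝ → Matrix (Fin k) (Fin k) ℂ)
    (hΛcont : ∀ i j, ContinuousOn (fun t => Λ t i j) (Set.Ico 0 (2*A)))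
    (hΛpos : ∀ t ∈ Set.Ico (0:ℝ) (2*A), (Λ t).PosDef)
    (Λhat : Matrix (Fin k) (Fin k) ℂ) (hΛhat : Λhat.PosDef)
    (hΛlim : ∀ i j, Tendsto (fun t => Λ t i j)
      (nhdsWithin (2*A) (Set.Iio (2*A))) (nhds (Λhat i j)))
    (M : ℝ → Matrix (Fin k) (Fin k) ℂ)
    (hM : ∀ t, M t = Λ t + ((2*t/(A*(2*A - t)) : ℝ) : ℂ) •
        Matrix.diagonal (fun i => (μ i : ℂ)))
    (Λhat₀ : Matrix {i : Fin k // q ≤ (i : ℕ)} {i : Fin k // q ≤ (i : ℕ)} ℂ)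
    (hΛhat₀ : ∀ i j, Λhat₀ i j = Λhat i.1 j.1) :
    Tendsto (fun t => (((2*A - t : ℝ) : ℂ))^q * (M t).det)
      (nhdsWithin (2*A) (Set.Iio (2*A)))
      (nhds ((4:ℂ)^q * (∏ i ∈ Finset.univ.filter (fun i : Fin k => (i:ℕ) < q),
        ((μ i : ℝ) : ℂ)) * Λhat₀.det)) := by
  classical
  set L := nhdsWithin (2*A) (Set.Iio (2*A)) with hL
  set D : Matrix (Fin k) (Fin k) ℂ := Matrix.diagonal (fun i => (μ i : ℂ)) with hD
  set cd : Fin k → ℝ → ℂ := fun i t => if (i:ℕ) < q then ((2*A - t : ℝ) : ℂ) else 1 with hcd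
  set cd0 : Fin k → ℂ := fun i => if (i:ℕ) < q then 0 else 1 with hcd0
  set F : ℝ → Matrix (Fin k) (Fin k) ℂ :=
    fun t => Matrix.diagonal (fun i => cd i t) * Λ t + ((2*t/A : ℝ) : ℂ) • D with hF
  set N : Matrix (Fin k) (Fin k) ℂ :=
    Matrix.diagonal cd0 * Λhat + (4 : ℂ) • D with hN
  have hFentry : ∀ t i j, F t i j = cd i t * Λ t i j + ((2*t/A : ℝ) : ℂ) * D i j := by
    intro t i j
    simp [hF, Matrix.add_apply, Matrix.smul_apply, Matrix.diagonal_mul, smul_eq_mul]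
  have hNentry : ∀ i j, N i j = cd0 i * Λhat i j + (4:ℂ) * D i j := by
    intro i j
    simp [hN, Matrix.add_apply, Matrix.smul_apply, Matrix.diagonal_mul, smul_eq_mul]
  -- limits
  have hc1 : Tendsto (fun t : ℝ => ((2*A - t : ℝ) : ℂ)) L (nhds 0) := by
    have h1 : Continuous (fun t : ℝ => ((2*A - t : ℝ) : ℂ)) :=
      Complex.continuous_ofReal.comp (continuous_const.sub continuous_id)
    have h2 := (h1.tendsto (2*A)).mono_left
      (nhdsWithin_le_nhds (s := Set.Iio (2*A)))
    simpa using h2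
  have hc2 : Tendsto (fun t : ℝ => ((2*t/A : ℝ) : ℂ)) L (nhds 4) := by
    have h1 : Continuous (fun t : ℝ => ((2*t/A : ℝ) : ℂ)) :=
      Complex.continuous_ofReal.comp ((continuous_const.mul continuous_id).div_const A)
    have h2 := (h1.tendsto (2*A)).mono_left
      (nhdsWithin_le_nhds (s := Set.Iio (2*A)))
    have h3 : ((2*(2*A)/A : ℝ) : ℂ) = 4 := by
      have h4 : (2*(2*A)/A : ℝ) = 4 := by field_simp; ring
      rw [h4]; norm_num
    rwa [h3] at h2
  have hlim : Tendsto F L (nhds N) := by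
    apply tendsto_pi_nhds.2
    intro i
    rw [tendsto_pi_nhds]
    intro j
    have tcd : Tendsto (fun t => cd i t) L (nhds (cd0 i)) := by
      by_cases hi : (i:ℕ) < q
      · simpa [hcd, hcd0, hi] using hc1
      · simp only [hcd, hcd0, if_neg hi]
        exact tendsto_const_nhds
    have h5 := (tcd.mul (hΛlim i j)).add (hc2.mul (tendsto_const_nhds (x := D i j)))
    refine Tendsto.congr (fun t => (hFentry t i j).symm) ?_
    rw [hNentry i j]
    exact h5
  have hdetF : Tendsto (fun t => (F t).det) L (nhds N.det) :=
    ((continuous_id.matrix_det).tendsto N).comp hlim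
  -- eventual equality
  have heq : ∀ t ∈ Set.Iio (2*A), (((2*A - t : ℝ) : ℂ))^q * (M t).det = (F t).det := by
    intro t ht
    have hs : (2*A - t) ≠ 0 := by
      have h6 := ht.out
      intro h; rw [sub_eq_zero] at h; exact absurd h.symm (ne_of_lt h6)
    have hFM : F t = Matrix.diagonal (fun i => cd i t) * M t := by
      ext i j
      rw [hFentry, Matrix.diagonal_mul, hM]
      simp only [Matrix.add_apply, Matrix.smul_apply, smul_eq_mul]
      by_cases hij : i = j
      · subst hij
        by_cases hi : (i:ℕ) < q
        · have key : ((2*A - t : ℝ) : ℂ) * ((2*t/(A*(2*A - t)) : ℝ) : ℂ)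
              = ((2*t/A : ℝ) : ℂ) := by
            rw [← Complex.ofReal_mul]
            congr 1
            field_simp
          simp only [hcd, if_pos hi, hD, Matrix.diagonal_apply_eq]
          rw [mul_add, ← mul_assoc, key]
        · simp [hcd, hi, hD, Matrix.diagonal_apply_eq, hμzero i (le_of_not_gt hi)]
      · simp [hD, Matrix.diagonal_apply_ne _ hij]
    rw [hFM, Matrix.det_mul, Matrix.det_diagonal]
    congr 1
    simp only [hcd]
    rw [Finset.prod_ite, Finset.prod_const, Finset.prod_const_one, mul_one,
      card_lem k q hq]
  -- determinant of N
  have hsub : N.submatrix (Equiv.sumCompl (fun i : Fin k => q ≤ (i:ℕ)))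
        (Equiv.sumCompl (fun i : Fin k => q ≤ (i:ℕ)))
      = Matrix.fromBlocks Λhat₀
        (Matrix.of fun (i : {i : Fin k // q ≤ (i:ℕ)}) (j : {i : Fin k // ¬ q ≤ (i:ℕ)}) =>
          Λhat i.1 j.1)
        0 (Matrix.diagonal fun i : {i : Fin k // ¬ q ≤ (i:ℕ)} => (4:ℂ) * ((μ i.1 : ℝ) : ℂ)) := by
    ext i j
    cases i with
    | inl i =>
      cases j with
      | inl j =>
        have h7 : ¬ ((i.1 : ℕ) < q) := not_lt.mpr i.2
        simp only [Matrix.submatrix_apply, Equiv.sumCompl_apply_inl,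
          Matrix.fromBlocks_apply₁₁]
        rw [hNentry, hΛhat₀ i j]
        simp [hcd0, h7, hD, Matrix.diagonal_apply, hμzero i.1 i.2]
      | inr j =>
        have h7 : ¬ ((i.1 : ℕ) < q) := not_lt.mpr i.2
        have h8 : i.1 ≠ j.1 := by
          intro h
          exact j.2 (h ▸ i.2)
        simp only [Matrix.submatrix_apply, Equiv.sumCompl_apply_inl,
          Equiv.sumCompl_apply_inr, Matrix.fromBlocks_apply₁₂, Matrix.of_apply]
        rw [hNentry]
        simp [hcd0, h7, hD, Matrix.diagonal_apply_ne _ h8]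
    | inr i =>
      cases j with
      | inl j =>
        have h7 : (i.1 : ℕ) < q := not_le.mp i.2
        have h8 : i.1 ≠ j.1 := by
          intro h
          exact i.2 (h ▸ j.2)
        simp only [Matrix.submatrix_apply, Equiv.sumCompl_apply_inl,
          Equiv.sumCompl_apply_inr, Matrix.fromBlocks_apply₂₁, Matrix.zero_apply]
        rw [hNentry]
        simp [hcd0, h7, hD, Matrix.diagonal_apply_ne _ h8]
      | inr j =>
        have h7 : (i.1 : ℕ) < q := not_le.mp i.2
        simp only [Matrix.submatrix_apply, Equiv.sumCompl_apply_inr,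
          Matrix.fromBlocks_apply₂₂]
        rw [hNentry]
        by_cases hij : i = j
        · subst hij
          simp [hcd0, h7, hD, Matrix.diagonal_apply_eq]
        · have h8 : i.1 ≠ j.1 := fun h => hij (Subtype.ext h)
          simp [hcd0, h7, hD, Matrix.diagonal_apply_ne _ h8,
            Matrix.diagonal_apply_ne _ hij]
  have hdetN : N.det = (4:ℂ)^q * (∏ i ∈ Finset.univ.filter (fun i : Fin k => (i:ℕ) < q),
      ((μ i : ℝ) : ℂ)) * Λhat₀.det := by
    rw [← Matrix.det_submatrix_equiv_self (Equiv.sumCompl (fun i : Fin k => q ≤ (i:ℕ))) N,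
      hsub, Matrix.det_fromBlocks_zero₂₁, Matrix.det_diagonal]
    have hprod : (∏ i : {i : Fin k // ¬ q ≤ (i:ℕ)}, ((4:ℂ) * ((μ i.1 : ℝ) : ℂ)))
        = (4:ℂ)^q * ∏ i ∈ Finset.univ.filter (fun i : Fin k => (i:ℕ) < q),
          ((μ i : ℝ) : ℂ) := by
      rw [← Finset.prod_subtype (Finset.univ.filter (fun i : Fin k => (i:ℕ) < q))
        (fun x => by simp [not_le]) (fun i => (4:ℂ) * ((μ i : ℝ) : ℂ))]
      rw [Finset.prod_mul_distrib, Finset.prod_const, card_lem k q hq]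
    rw [hprod]; ring
  rw [← hdetN]
  refine Tendsto.congr' ?_ hdetF
  filter_upwards [self_mem_nhdsWithin] with t ht
  exact (heq t ht).symm
end

section
/- With the hypotheses of the previous setting (M(t) = Λ(t) + (2t/(A(2A−t))) Δ with Δ = diag(μ₁,…,μ_q,0,…,0), μᵢ > 0, Λ(t) positive definite converging to positive definite Λ̂, and Λ̂₀ the lower-right (k−q)×(k−q) block), the inverse matrices converge: lim_{t→2A} M(t)⁻¹ = the block matrix with upper-left q×q block 0, off-diagonal blocks 0, and lower-right block Λ̂₀⁻¹. In particular the limit is positive semidefinite with kernel equal to the span of the first q standard basis vectors. -/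
open Matrix Filter
open scoped ComplexOrder Topology

namespace Stmt7Aux

variable {k : ℕ} {n : Type*} [Fintype n] [DecidableEq n]

/-- Inclusion matrix of the subtype of a predicate. -/
noncomputable def incl (p : Fin k → Prop) [DecidablePred p] : Matrix (Fin k) (Subtype p) ℂ :=
  Matrix.of fun i a => if i = (a : Fin k) then 1 else 0

lemma mul_incl (p : Fin k → Prop) [DecidablePred p] (X : Matrix n (Fin k) ℂ) (r : n)
    (a : Subtype p) : (X * incl p) r a = X r a.1 := by
  simp [incl, Matrix.mul_apply, mul_ite]

lemma incl_mul (p : Fin k → Prop) [DecidablePred p] (Y : Matrix (Subtype p) n ℂ) (i : Fin k)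
    (r : n) : (incl p * Y) i r = if h : p i then Y ⟨i, h⟩ r else 0 := by
  rw [Matrix.mul_apply]
  split_ifs with h
  · rw [Finset.sum_eq_single (⟨i, h⟩ : Subtype p)]
    · simp [incl]
    · rintro b - hb
      simp only [incl, Matrix.of_apply]
      rw [if_neg fun hi => hb (Subtype.ext hi.symm), zero_mul]
    · simp
  · apply Finset.sum_eq_zero
    rintro b -
    simp only [incl, Matrix.of_apply]
    rw [if_neg, zero_mul]
    rintro rfl
    exact h b.2

lemma inclT_mul (p : Fin k → Prop) [DecidablePred p] (Z : Matrix (Fin k) n ℂ) (a : Subtype p)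
    (r : n) : ((incl p)ᴴ * Z) a r = Z a.1 r := by
  simp [incl, Matrix.mul_apply, Matrix.conjTranspose_apply, apply_ite (star : ℂ → ℂ), ite_mul]

lemma mul_inclT (p : Fin k → Prop) [DecidablePred p] (W : Matrix n (Subtype p) ℂ) (r : n)
    (i : Fin k) : (W * (incl p)ᴴ) r i = if h : p i then W r ⟨i, h⟩ else 0 := by
  have h1 : (W * (incl p)ᴴ) = ((incl p) * Wᴴ)ᴴ := by
    rw [Matrix.conjTranspose_mul, Matrix.conjTranspose_conjTranspose]
  rw [h1, Matrix.conjTranspose_apply, incl_mul]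
  split_ifs <;> simp

lemma inclT_mulVec (p : Fin k → Prop) [DecidablePred p] (x : Fin k → ℂ) (a : Subtype p) :
    ((incl p)ᴴ *ᵥ x) a = x a.1 := by
  simp [incl, Matrix.mulVec, dotProduct, Matrix.conjTranspose_apply,
    apply_ite (star : ℂ → ℂ), ite_mul]

lemma incl_mulVec (p : Fin k → Prop) [DecidablePred p] (y : Subtype p → ℂ) (i : Fin k) :
    ((incl p) *ᵥ y) i = if h : p i then y ⟨i, h⟩ else 0 := by
  rw [Matrix.mulVec, dotProduct]
  split_ifs with h
  · rw [Finset.sum_eq_single (⟨i, h⟩ : Subtype p)]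
    · simp [incl]
    · rintro b - hb
      simp only [incl, Matrix.of_apply]
      rw [if_neg fun hi => hb (Subtype.ext hi.symm), zero_mul]
    · simp
  · apply Finset.sum_eq_zero
    rintro b -
    simp only [incl, Matrix.of_apply]
    rw [if_neg, zero_mul]
    rintro rfl
    exact h b.2

lemma sub_eq_inclT_mul_incl (p : Fin k → Prop) [DecidablePred p]
    (M : Matrix (Fin k) (Fin k) ℂ) :
    M.submatrix (Subtype.val : Subtype p → Fin k) Subtype.val
      = (incl p)ᴴ * M * incl p := by
  ext a b
  rw [Matrix.mul_assoc, inclT_mul, mul_incl, Matrix.submatrix_apply]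

lemma posDef_sub (p : Fin k → Prop) [DecidablePred p] {M : Matrix (Fin k) (Fin k) ℂ}
    (hM : M.PosDef) :
    (M.submatrix (Subtype.val : Subtype p → Fin k) Subtype.val).PosDef := by
  refine Matrix.PosDef.of_dotProduct_mulVec_pos (hM.1.submatrix _) fun x hx => ?_
  rw [sub_eq_inclT_mul_incl]
  have key : star x ⬝ᵥ ((incl p)ᴴ * M * incl p) *ᵥ x
      = star (incl p *ᵥ x) ⬝ᵥ M *ᵥ (incl p *ᵥ x) := by
    rw [star_mulVec, ← Matrix.dotProduct_mulVec, Matrix.mulVec_mulVec, Matrix.mulVec_mulVec,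
      Matrix.mul_assoc]
  rw [key]
  apply hM.dotProduct_mulVec_pos
  obtain ⟨a, ha⟩ := Function.ne_iff.mp hx
  intro hzero
  apply ha
  have := congrFun hzero a.1
  rwa [incl_mulVec, Pi.zero_apply, dif_pos a.2, Subtype.coe_eta] at this

lemma sum_subtype_of_vanish {p : Fin k → Prop} [DecidablePred p] (f : Fin k → ℂ)
    (hf : ∀ i, ¬ p i → f i = 0) : ∑ a : Subtype p, f a.1 = ∑ i, f i := by
  classical
  rw [← Finset.sum_filter_of_ne (p := p) (fun i _ h => by by_contra hp; exact h (hf i hp))]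
  exact (Finset.sum_subtype _ (by simp) f).symm

lemma continuousAt_inv' {m : Type*} [Fintype m] [DecidableEq m]
    (X : Matrix m m ℂ) (h : X.det ≠ 0) :
    ContinuousAt (Inv.inv : Matrix m m ℂ → Matrix m m ℂ) X := by
  apply continuousAt_matrix_inv
  have : (Ring.inverse : ℂ → ℂ) = Inv.inv := Ring.inverse_eq_inv'
  rw [this]
  exact continuousAt_inv₀ h

lemma caMul {X : Type*} [TopologicalSpace X] {a b c : Type*} [Fintype b]
    {f : X → Matrix a b ℂ} {g : X → Matrix b c ℂ} {x : X}
    (hf : ContinuousAt f x) (hg : ContinuousAt g x) : ContinuousAt (fun x => f x * g x) x := by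
  have h : Continuous fun Y : Matrix a b ℂ × Matrix b c ℂ => Y.1 * Y.2 :=
    continuous_fst.matrix_mul continuous_snd
  exact h.continuousAt.comp (hf.prodMk hg)

end Stmt7Aux

open Stmt7Aux

theorem stmt_7 (k q : ℕ) (hq : q ≤ k) (A : ℝ) (hA : 0 < A)
    (μ : Fin k → ℝ) (hμpos : ∀ i : Fin k, (i : ℕ) < q → 0 < μ i)
    (hμzero : ∀ i : Fin k, q ≤ (i : ℕ) → μ i = 0)
    (Λ : ℝ → Matrix (Fin k) (Fin k) ℂ)
    (hΛcont : ∀ i j, ContinuousOn (fun t => Λ t i j) (Set.Ico 0 (2*A)))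
    (hΛpos : ∀ t ∈ Set.Ico (0:ℝ) (2*A), (Λ t).PosDef)
    (Λhat : Matrix (Fin k) (Fin k) ℂ) (hΛhat : Λhat.PosDef)
    (hΛlim : ∀ i j, Tendsto (fun t => Λ t i j)
      (nhdsWithin (2*A) (Set.Iio (2*A))) (nhds (Λhat i j)))
    (M : ℝ → Matrix (Fin k) (Fin k) ℂ)
    (hM : ∀ t, M t = Λ t + ((2*t/(A*(2*A - t)) : ℝ) : ℂ) •
        Matrix.diagonal (fun i => (μ i : ℂ)))
    (Λhat₀ : Matrix {i : Fin k // q ≤ (i : ℕ)} {i : Fin k // q ≤ (i : ℕ)} ℂ)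
    (hΛhat₀ : ∀ i j, Λhat₀ i j = Λhat i.1 j.1)
    (L : Matrix (Fin k) (Fin k) ℂ)
    (hL : ∀ i j : Fin k, L i j =
      if hi : q ≤ (i : ℕ) then
        (if hj : q ≤ (j : ℕ) then Λhat₀⁻¹ ⟨i, hi⟩ ⟨j, hj⟩ else 0)
      else 0) :
    (∀ i j, Tendsto (fun t => (M t)⁻¹ i j)
        (nhdsWithin (2*A) (Set.Iio (2*A))) (nhds (L i j))) ∧
    L.PosSemidef ∧
    (∀ x : Fin k → ℂ, L.mulVec x = 0 ↔
      x ∈ Submodule.span ℂ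
        (Set.range fun i : {i : Fin k // (i : ℕ) < q} => Pi.single i.1 (1:ℂ))) := by
  classical
  have hp₁ : DecidablePred (fun i : Fin k => (i : ℕ) < q) := fun i => Nat.decLt _ _
  set E : Matrix (Fin k) {i : Fin k // (i : ℕ) < q} ℂ := incl (fun i => (i : ℕ) < q) with hE
  set F : Matrix (Fin k) {i : Fin k // q ≤ (i : ℕ)} ℂ := incl (fun i => q ≤ (i : ℕ)) with hF
  set lfil := nhdsWithin (2*A) (Set.Iio (2*A)) with hlfil
  have h2A : (0:ℝ) < 2*A := by linarith
  -- basic posdef facts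
  have hdetΛ : Λhat.det ≠ 0 := hΛhat.det_pos.ne'
  have hB : (Λhat⁻¹).PosDef := hΛhat.inv
  set B : Matrix (Fin k) (Fin k) ℂ := Λhat⁻¹ with hBdef
  set S : Matrix {i : Fin k // (i : ℕ) < q} {i : Fin k // (i : ℕ) < q} ℂ := Eᴴ * B * E with hSdef
  have hSpd : S.PosDef := by
    rw [hSdef, hE, ← sub_eq_inclT_mul_incl]
    exact posDef_sub _ hB
  have hdetS : S.det ≠ 0 := hSpd.det_pos.ne'
  have hΛ₀pd : Λhat₀.PosDef := by
    have : Λhat₀ = Λhat.submatrix (Subtype.val : {i : Fin k // q ≤ (i : ℕ)} → Fin k) Subtype.val := by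
      ext a b; rw [hΛhat₀, Matrix.submatrix_apply]
    rw [this]
    exact posDef_sub _ hΛhat
  -- the limit candidate
  set Dinv : Matrix {i : Fin k // (i : ℕ) < q} {i : Fin k // (i : ℕ) < q} ℂ := Matrix.diagonal (fun a => ((μ a.1 : ℂ))⁻¹)
    with hDinv
  set g : Matrix (Fin k) (Fin k) ℂ × ℝ → Matrix (Fin k) (Fin k) ℂ := fun P =>
    P.1⁻¹ - P.1⁻¹ * E * (((P.2 : ℝ) : ℂ) • Dinv + Eᴴ * P.1⁻¹ * E)⁻¹ * Eᴴ * P.1⁻¹ with hg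
  set L0 : Matrix (Fin k) (Fin k) ℂ := g (Λhat, 0) with hL0
  have hL0eq : L0 = B - B * E * S⁻¹ * Eᴴ * B := by
    rw [hL0, hg]; simp [hSdef, hBdef]
  -- row and column vanishing of L0
  have hrows : ∀ (i : Fin k), (i : ℕ) < q → ∀ j, L0 i j = 0 := by
    have hEL : Eᴴ * L0 = 0 := by
      rw [hL0eq, Matrix.mul_sub]
      have h1 : Eᴴ * (B * E * S⁻¹ * Eᴴ * B) = (Eᴴ * B * E) * (S⁻¹ * (Eᴴ * B)) := by
        simp only [Matrix.mul_assoc]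
      rw [h1, ← hSdef, ← Matrix.mul_assoc S, Matrix.mul_nonsing_inv _ hdetS.isUnit]
      rw [Matrix.one_mul, sub_self]
    intro i hi j
    have := congrFun (congrFun hEL ⟨i, hi⟩) j
    rwa [hE, inclT_mul, Matrix.zero_apply] at this
  have hcols : ∀ (j : Fin k), (j : ℕ) < q → ∀ i, L0 i j = 0 := by
    have hLE : L0 * E = 0 := by
      rw [hL0eq, Matrix.sub_mul]
      have h1 : B * E * S⁻¹ * Eᴴ * B * E = (B * E) * (S⁻¹ * (Eᴴ * B * E)) := by
        simp only [Matrix.mul_assoc]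
      rw [h1, ← hSdef, Matrix.nonsing_inv_mul _ hdetS.isUnit, Matrix.mul_one, sub_self]
    intro j hj i
    have := congrFun (congrFun hLE i) ⟨j, hj⟩
    rwa [hE, mul_incl, Matrix.zero_apply] at this
  -- the lower-right block of L0 is the inverse of Λhat₀
  have hΛL0 : ∀ (i : Fin k), q ≤ (i : ℕ) → ∀ j, (Λhat * L0) i j = (1 : Matrix (Fin k) (Fin k) ℂ) i j := by
    have hΛB : Λhat * B = 1 := Matrix.mul_nonsing_inv _ hdetΛ.isUnit
    have hid : Λhat * L0 = 1 - E * (S⁻¹ * (Eᴴ * B)) := by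
      rw [hL0eq, Matrix.mul_sub]
      have h1 : Λhat * (B * E * S⁻¹ * Eᴴ * B) = (Λhat * B) * (E * (S⁻¹ * (Eᴴ * B))) := by
        simp only [Matrix.mul_assoc]
      rw [h1, hΛB, one_mul]
    intro i hi j
    rw [hid, Matrix.sub_apply, hE, incl_mul, dif_neg (by exact Nat.not_lt.mpr hi), sub_zero]
  have hR : Λhat₀⁻¹ = Matrix.of (fun (a b : {i : Fin k // q ≤ (i : ℕ)}) => L0 a.1 b.1) := by
    apply Matrix.inv_eq_right_inv
    ext a b
    rw [Matrix.mul_apply]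
    have : ∀ m : {i : Fin k // q ≤ (i : ℕ)},
        Λhat₀ a m * L0 m.1 b.1 = Λhat a.1 m.1 * L0 m.1 b.1 := fun m => by rw [hΛhat₀]
    calc ∑ m : {i : Fin k // q ≤ (i : ℕ)}, Λhat₀ a m * (Matrix.of
          (fun (a b : {i : Fin k // q ≤ (i : ℕ)}) => L0 a.1 b.1)) m b
        = ∑ m : {i : Fin k // q ≤ (i : ℕ)}, Λhat a.1 m.1 * L0 m.1 b.1 := by
          apply Finset.sum_congr rfl; intro m _; rw [hΛhat₀]; rfl
      _ = ∑ m : Fin k, Λhat a.1 m * L0 m b.1 := by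
          exact sum_subtype_of_vanish (fun m => Λhat a.1 m * L0 m b.1)
            (fun i hi => by show Λhat a.1 i * L0 i b.1 = 0; rw [hrows i (Nat.not_le.mp hi) b.1, mul_zero])
      _ = (Λhat * L0) a.1 b.1 := (Matrix.mul_apply).symm
      _ = (1 : Matrix (Fin k) (Fin k) ℂ) a.1 b.1 := hΛL0 a.1 a.2 b.1
      _ = (1 : Matrix {i : Fin k // q ≤ (i : ℕ)} {i : Fin k // q ≤ (i : ℕ)} ℂ) a b := by
          by_cases hab : a = b
          · subst hab; simp
          · rw [Matrix.one_apply_ne hab, Matrix.one_apply_ne (fun h => hab (Subtype.ext h))]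
  have hL0L : L0 = L := by
    ext i j
    rw [hL i j]
    by_cases hi : q ≤ (i : ℕ)
    · by_cases hj : q ≤ (j : ℕ)
      · rw [dif_pos hi, dif_pos hj, hR]; rfl
      · rw [dif_pos hi, dif_neg hj]
        exact hcols j (Nat.not_le.mp hj) i
    · rw [dif_neg hi]
      exact hrows i (Nat.not_le.mp hi) j
  -- L as a congruence, positive semidefiniteness
  have hLF : L = F * Λhat₀⁻¹ * Fᴴ := by
    ext i j
    rw [Matrix.mul_assoc, hF, incl_mul, hL i j]
    by_cases hi : q ≤ (i : ℕ)
    · rw [dif_pos hi, dif_pos hi, mul_inclT]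
    · rw [dif_neg hi, dif_neg hi]
  have hPSD : L.PosSemidef := by
    rw [hLF]
    exact (hΛ₀pd.inv.posSemidef).mul_mul_conjTranspose_same F
  -- kernel characterization
  have hker : ∀ x : Fin k → ℂ, L.mulVec x = 0 ↔ ∀ i : Fin k, q ≤ (i : ℕ) → x i = 0 := by
    intro x
    have hy : ∀ a : {i : Fin k // q ≤ (i : ℕ)}, (Fᴴ *ᵥ x) a = x a.1 := fun a => by
      rw [hF]; exact inclT_mulVec _ x a
    have hmv : L *ᵥ x = F *ᵥ (Λhat₀⁻¹ *ᵥ (Fᴴ *ᵥ x)) := by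
      rw [hLF, Matrix.mulVec_mulVec, Matrix.mulVec_mulVec]
    constructor
    · intro h0 i hi
      have h0' : F *ᵥ (Λhat₀⁻¹ *ᵥ (Fᴴ *ᵥ x)) = 0 := by rw [← hmv]; exact h0
      have hNy : Λhat₀⁻¹ *ᵥ (Fᴴ *ᵥ x) = 0 := by
        ext a
        have h2 := congrFun h0' a.1
        rw [hF, incl_mulVec, dif_pos a.2, Subtype.coe_eta, Pi.zero_apply] at h2
        rw [h2, Pi.zero_apply]
      have hyzero : Fᴴ *ᵥ x = 0 := by
        have hinj : Function.Injective (Λhat₀⁻¹).mulVec :=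
          Matrix.mulVec_injective_iff_isUnit.mpr hΛ₀pd.inv.isUnit
        apply hinj
        rw [hNy, Matrix.mulVec_zero]
      have h3 := congrFun hyzero ⟨i, hi⟩
      rw [hy] at h3
      exact h3
    · intro hx
      have hyz : Fᴴ *ᵥ x = 0 := by
        ext a; rw [hy, Pi.zero_apply]; exact hx a.1 a.2
      rw [hmv, hyz, Matrix.mulVec_zero, Matrix.mulVec_zero]
  -- span characterization
  have hspan : ∀ x : Fin k → ℂ, (x ∈ Submodule.span ℂ
      (Set.range fun i : {i : Fin k // (i : ℕ) < q} => Pi.single i.1 (1:ℂ)))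
      ↔ ∀ i : Fin k, q ≤ (i : ℕ) → x i = 0 := by
    intro x
    constructor
    · intro hx
      induction hx using Submodule.span_induction with
      | mem y hy =>
        obtain ⟨a, rfl⟩ := hy
        intro i hi
        exact Pi.single_eq_of_ne
          (fun h => (Nat.not_lt.mpr hi) (by rw [h]; exact a.2)) 1
      | zero => intro i hi; rfl
      | add y z hy hz hy' hz' => intro i hi; rw [Pi.add_apply, hy' i hi, hz' i hi, add_zero]
      | smul c y hy hy' => intro i hi; rw [Pi.smul_apply, hy' i hi, smul_zero]
    · intro hx
      have hrepr : x = ∑ i : Fin k, Pi.single i (x i) := (Finset.univ_sum_single x).symm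
      rw [hrepr]
      apply Submodule.sum_mem
      intro i _
      by_cases hi : (i : ℕ) < q
      · have hsm : Pi.single i (x i) = x i • (Pi.single i (1:ℂ) : Fin k → ℂ) := by
          rw [← Pi.single_smul, smul_eq_mul, mul_one]
        rw [hsm]
        exact Submodule.smul_mem _ _ (Submodule.subset_span ⟨⟨i, hi⟩, rfl⟩)
      · rw [hx i (Nat.not_lt.mp hi), Pi.single_zero]
        exact Submodule.zero_mem _
  -- convergence of the scalar factor
  have hεtend : Tendsto (fun t => A*(2*A - t)/(2*t)) lfil (nhds 0) := by
    have hc : ContinuousAt (fun t : ℝ => A*(2*A - t)/(2*t)) (2*A) := by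
      apply ContinuousAt.div
      · fun_prop
      · fun_prop
      · exact ne_of_gt (by linarith)
    have h0 : A*(2*A - 2*A)/(2*(2*A)) = 0 := by ring
    have h1 := hc.tendsto.mono_left (nhdsWithin_le_nhds (s := Set.Iio (2*A)))
    rw [hlfil]
    rw [h0] at h1
    exact h1
  have hΛtend : Tendsto Λ lfil (nhds Λhat) :=
    tendsto_pi_nhds.mpr fun i => tendsto_pi_nhds.mpr fun j => hΛlim i j
  have hpair : Tendsto (fun t => (Λ t, A*(2*A - t)/(2*t))) lfil (nhds (Λhat, 0)) :=
    hΛtend.prodMk_nhds hεtend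
  -- continuity of g at the limit point
  have hval : (((0:ℝ) : ℂ)) • Dinv + Eᴴ * Λhat⁻¹ * E = S := by
    simp [hSdef, hBdef]
  have hgcont : ContinuousAt g (Λhat, 0) := by
    have hc1 : ContinuousAt (fun P : Matrix (Fin k) (Fin k) ℂ × ℝ => P.1⁻¹) (Λhat, 0) :=
      (continuousAt_inv' Λhat hdetΛ).comp continuousAt_fst
    have hc2 : ContinuousAt (fun P : Matrix (Fin k) (Fin k) ℂ × ℝ =>
        ((P.2 : ℝ) : ℂ) • Dinv + Eᴴ * P.1⁻¹ * E) (Λhat, 0) := by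
      apply ContinuousAt.add
      · exact ((Complex.continuous_ofReal.comp continuous_snd).smul
          continuous_const).continuousAt
      · exact ((continuous_const.matrix_mul continuous_id).matrix_mul
          continuous_const).continuousAt.comp hc1
    have hc3 : ContinuousAt (fun P : Matrix (Fin k) (Fin k) ℂ × ℝ =>
        (((P.2 : ℝ) : ℂ) • Dinv + Eᴴ * P.1⁻¹ * E)⁻¹) (Λhat, 0) := by
      refine ContinuousAt.comp ?_ hc2
      show ContinuousAt Inv.inv (((0:ℝ):ℂ) • Dinv + Eᴴ * (Λhat, (0:ℝ)).1⁻¹ * E)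
      have : ((Λhat, (0:ℝ)).1)⁻¹ = Λhat⁻¹ := rfl
      rw [this, hval]
      exact continuousAt_inv' S hdetS
    rw [hg]
    exact hc1.sub (caMul (caMul (caMul (caMul hc1 continuousAt_const) hc3)
      continuousAt_const) hc1)
  -- Woodbury identity on (0, 2A)
  have hMg : ∀ᶠ t in lfil, (M t)⁻¹ = g (Λ t, A*(2*A - t)/(2*t)) := by
    rw [hlfil]
    filter_upwards [Ioo_mem_nhdsLT h2A] with t ht
    have ht0 : (0:ℝ) < t := ht.1
    have ht2 : t < 2*A := ht.2
    have hden : (0:ℝ) < A*(2*A - t) := mul_pos hA (by linarith)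
    have hcpos : (0:ℝ) < 2*t/(A*(2*A - t)) := div_pos (by linarith) hden
    set C : Matrix {i : Fin k // (i:ℕ) < q} {i : Fin k // (i:ℕ) < q} ℂ :=
      Matrix.diagonal (fun a => ((2*t/(A*(2*A - t)) : ℝ) : ℂ) * (μ a.1 : ℂ)) with hC
    have hMsplit : M t = Λ t + E * C * Eᴴ := by
      rw [hM t]
      congr 1
      ext i j
      rw [Matrix.mul_assoc, hE, incl_mul, Matrix.smul_apply, Matrix.diagonal_apply]
      by_cases hi : (i:ℕ) < q
      · rw [dif_pos hi, mul_inclT]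
        by_cases hj : (j:ℕ) < q
        · rw [dif_pos hj, hC, Matrix.diagonal_apply]
          by_cases hij : i = j
          · subst hij
            rw [if_pos rfl, if_pos rfl, smul_eq_mul]
          · rw [if_neg hij, if_neg (fun h => hij (Subtype.ext_iff.mp h)), smul_zero]
        · rw [dif_neg hj, if_neg (fun h : i = j => hj (h ▸ hi)), smul_zero]
      · rw [dif_neg hi]
        by_cases hij : i = j
        · rw [if_pos hij, hμzero i (Nat.not_lt.mp hi)]
          simp
        · rw [if_neg hij, smul_zero]
    have ht' : t ∈ Set.Ico (0:ℝ) (2*A) := ⟨le_of_lt ht0, ht2⟩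
    have hΛtpd : (Λ t).PosDef := hΛpos t ht'
    have hCpd : C.PosDef := by
      rw [hC]
      refine Matrix.posDef_diagonal_iff.mpr fun a => ?_
      have h4 : (0:ℝ) < 2*t/(A*(2*A - t)) * μ a.1 := mul_pos hcpos (hμpos a.1 a.2)
      rw [show ((2*t/(A*(2*A - t)) : ℝ) : ℂ) * ((μ a.1 : ℝ) : ℂ)
          = ((2*t/(A*(2*A - t)) * μ a.1 : ℝ) : ℂ) by push_cast; ring]
      exact Complex.zero_lt_real.mpr h4
    have hCinv : C⁻¹ = ((A*(2*A - t)/(2*t) : ℝ) : ℂ) • Dinv := by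
      apply Matrix.inv_eq_right_inv
      rw [hC, hDinv, mul_smul_comm, Matrix.diagonal_mul_diagonal,
        show (1 : Matrix {i : Fin k // (i:ℕ) < q} {i : Fin k // (i:ℕ) < q} ℂ)
          = Matrix.diagonal (fun _ => (1:ℂ)) from (Matrix.diagonal_one).symm,
        ← Matrix.diagonal_smul]
      refine congrArg Matrix.diagonal (funext fun a => ?_)
      have hμ : ((μ a.1 : ℝ) : ℂ) ≠ 0 := by
        exact_mod_cast (hμpos a.1 a.2).ne'
      rw [Pi.smul_apply, smul_eq_mul, mul_assoc, mul_inv_cancel₀ hμ, mul_one,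
        ← Complex.ofReal_mul, show A*(2*A - t)/(2*t) * (2*t/(A*(2*A - t))) = 1 by
          field_simp; exact div_self (by linarith : (0:ℝ) < A*2 - t).ne']
      exact Complex.ofReal_one
    have hSt : (Eᴴ * (Λ t)⁻¹ * E).PosDef := by
      rw [hE, ← sub_eq_inclT_mul_incl]
      exact posDef_sub _ hΛtpd.inv
    have hsum : (C⁻¹ + Eᴴ * (Λ t)⁻¹ * E).PosDef := by
      refine Matrix.PosDef.posSemidef_add ?_ hSt
      rw [hCinv, hDinv, ← Matrix.diagonal_smul]
      refine Matrix.posSemidef_diagonal_iff.mpr fun a => ?_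
      rw [Pi.smul_apply, smul_eq_mul,
        show ((A*(2*A - t)/(2*t) : ℝ) : ℂ) * ((μ a.1 : ℝ) : ℂ)⁻¹
          = ((A*(2*A - t)/(2*t) * (μ a.1)⁻¹ : ℝ) : ℂ) by push_cast; ring]
      refine Complex.zero_le_real.mpr (mul_nonneg (le_of_lt ?_) (inv_nonneg.mpr (le_of_lt (hμpos a.1 a.2))))
      exact div_pos hden (by linarith)
    have hwood := Matrix.add_mul_mul_inv_eq_sub (Λ t) E C Eᴴ hΛtpd.isUnit hCpd.isUnit hsum.isUnit
    rw [hMsplit, hwood, hg, hCinv]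
  -- final assembly of the limit
  have hMtend : Tendsto (fun t => (M t)⁻¹) lfil (nhds L0) := by
    have h5 := hgcont.tendsto.comp hpair
    exact h5.congr' (hMg.mono fun t ht => ht.symm)
  refine ⟨fun i j => ?_, hPSD, fun x => (hker x).trans (hspan x).symm⟩
  rw [← hL0L]
  exact tendsto_pi_nhds.mp (tendsto_pi_nhds.mp hMtend i) j
end

section
/- Let Γ : [0,T) → Matrix (Fin k) (Fin k) ℂ be continuous with Γ(t) positive semidefinite, and let H(t) := (H₀⁻¹ + ∫₀ᵗ Γ(u) du)⁻¹ where H₀ is Hermitian positive definite. Then for each fixed v ∈ ℂᵏ, the function t ↦ v* H(t) v is non-increasing on [0,T). -/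
open Matrix Filter MeasureTheory
open scoped ComplexOrder Topology

private lemma conj_intervalIntegral' (f : ℝ → ℂ) (a b : ℝ) :
    (starRingEnd ℂ) (∫ u in a..b, f u) = ∫ u in a..b, (starRingEnd ℂ) (f u) := by
  simp only [intervalIntegral, map_sub, ← integral_conj]

private lemma re_intervalIntegral' (f : ℝ → ℂ) {a b : ℝ}
    (hf : IntervalIntegrable f volume a b) :
    (∫ u in a..b, f u).re = ∫ u in a..b, (f u).re := by
  simp only [intervalIntegral, Complex.sub_re, ← RCLike.re_eq_complex_re, map_sub]
  rw [← integral_re hf.1, ← integral_re hf.2]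

private lemma im_intervalIntegral' (f : ℝ → ℂ) {a b : ℝ}
    (hf : IntervalIntegrable f volume a b) :
    (∫ u in a..b, f u).im = ∫ u in a..b, (f u).im := by
  simp only [intervalIntegral, Complex.sub_im, ← RCLike.im_eq_complex_im, map_sub]
  rw [← integral_im hf.1, ← integral_im hf.2]

private lemma inv_sub_inv_psd' {k : ℕ} (A P : Matrix (Fin k) (Fin k) ℂ)
    (hA : A.PosDef) (hP : P.PosSemidef) : (A⁻¹ - (A + P)⁻¹).PosSemidef := by
  have hB : (A + P).PosDef := hA.add_posSemidef hP
  set B := A + P with hBdef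
  have h1 : A * A⁻¹ = 1 := Matrix.mul_nonsing_inv _ ((Matrix.isUnit_iff_isUnit_det _).1 hA.isUnit)
  have h1' : A⁻¹ * A = 1 := Matrix.nonsing_inv_mul _ ((Matrix.isUnit_iff_isUnit_det _).1 hA.isUnit)
  have h2 : B * B⁻¹ = 1 := Matrix.mul_nonsing_inv _ ((Matrix.isUnit_iff_isUnit_det _).1 hB.isUnit)
  have h2' : B⁻¹ * B = 1 := Matrix.nonsing_inv_mul _ ((Matrix.isUnit_iff_isUnit_det _).1 hB.isUnit)
  have e : B * (A⁻¹ - B⁻¹) * B = P * A⁻¹ * P + P := by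
    rw [mul_sub, sub_mul]
    have t1 : B * B⁻¹ * B = B := by rw [h2, one_mul]
    rw [t1, hBdef]
    rw [add_mul, h1, mul_add, add_mul, add_mul, one_mul, one_mul]
    have t2 : P * A⁻¹ * A = P := by rw [mul_assoc, h1', mul_one]
    rw [t2]
    abel
  have key : A⁻¹ - B⁻¹ = B⁻¹ * (P * A⁻¹ * P + P) * B⁻¹ := by
    calc A⁻¹ - B⁻¹ = (B⁻¹ * B) * (A⁻¹ - B⁻¹) * (B * B⁻¹) := by
          rw [h2', h2, one_mul, mul_one]
      _ = B⁻¹ * (B * (A⁻¹ - B⁻¹) * B) * B⁻¹ := by simp only [mul_assoc]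
      _ = B⁻¹ * (P * A⁻¹ * P + P) * B⁻¹ := by rw [e]
  rw [key]
  have hmid : (P * A⁻¹ * P + P).PosSemidef := by
    have := hA.inv.posSemidef.conjTranspose_mul_mul_same P
    rw [hP.isHermitian.eq] at this
    exact this.add hP
  have hBinv : (B⁻¹)ᴴ = B⁻¹ := hB.inv.isHermitian
  have := hmid.conjTranspose_mul_mul_same B⁻¹
  rwa [hBinv] at this

private lemma quad_integral' {k : ℕ} {T : ℝ} (Γ : ℝ → Matrix (Fin k) (Fin k) ℂ)
    (hΓcont : ∀ i j, ContinuousOn (fun t => Γ t i j) (Set.Ico 0 T))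
    {s t : ℝ} (hs : 0 ≤ s) (hst : s ≤ t) (ht : t < T) (x : Fin k → ℂ) :
    star x ⬝ᵥ (Matrix.of fun i j => ∫ u in s..t, Γ u i j : Matrix (Fin k) (Fin k) ℂ) *ᵥ x
      = ∫ u in s..t, star x ⬝ᵥ (Γ u) *ᵥ x := by
  have hsub : Set.uIcc s t ⊆ Set.Ico 0 T := by
    rw [Set.uIcc_of_le hst]
    exact fun u hu => ⟨hs.trans hu.1, lt_of_le_of_lt hu.2 ht⟩
  have hint : ∀ i j, IntervalIntegrable (fun u => Γ u i j) volume s t :=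
    fun i j => ((hΓcont i j).mono hsub).intervalIntegrable
  symm
  calc ∫ u in s..t, star x ⬝ᵥ (Γ u) *ᵥ x
      = ∫ u in s..t, ∑ i, star (x i) * ∑ j, Γ u i j * x j := by
        refine intervalIntegral.integral_congr fun u _ => ?_
        simp [dotProduct, Matrix.mulVec]
    _ = ∑ i, ∫ u in s..t, star (x i) * ∑ j, Γ u i j * x j := by
        refine intervalIntegral.integral_finset_sum (μ := volume)
          (f := fun i u => star (x i) * ∑ j, Γ u i j * x j) fun i _ => ?_
        exact ContinuousOn.intervalIntegrable <| continuousOn_const.mul <|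
          continuousOn_finset_sum _ fun j _ => ((hΓcont i j).mono hsub).mul continuousOn_const
    _ = ∑ i, star (x i) * ∫ u in s..t, ∑ j, Γ u i j * x j := by
        refine Finset.sum_congr rfl fun i _ => ?_
        rw [intervalIntegral.integral_const_mul]
    _ = ∑ i, star (x i) * ∑ j, ∫ u in s..t, Γ u i j * x j := by
        refine Finset.sum_congr rfl fun i _ => ?_
        rw [intervalIntegral.integral_finset_sum (μ := volume)
          (f := fun j u => Γ u i j * x j) fun j _ => (hint i j).mul_const _]
    _ = ∑ i, star (x i) * ∑ j, (∫ u in s..t, Γ u i j) * x j := by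
        refine Finset.sum_congr rfl fun i _ => ?_
        congr 1
        exact Finset.sum_congr rfl fun j _ => intervalIntegral.integral_mul_const _ _
    _ = star x ⬝ᵥ (Matrix.of fun i j => ∫ u in s..t, Γ u i j : Matrix (Fin k) (Fin k) ℂ) *ᵥ x := by
        simp [dotProduct, Matrix.mulVec]

private lemma integral_psd' {k : ℕ} {T : ℝ} (Γ : ℝ → Matrix (Fin k) (Fin k) ℂ)
    (hΓcont : ∀ i j, ContinuousOn (fun t => Γ t i j) (Set.Ico 0 T))
    (hΓpsd : ∀ t ∈ Set.Ico (0:ℝ) T, (Γ t).PosSemidef)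
    {s t : ℝ} (hs : 0 ≤ s) (hst : s ≤ t) (ht : t < T) :
    (Matrix.of fun i j => ∫ u in s..t, Γ u i j : Matrix (Fin k) (Fin k) ℂ).PosSemidef := by
  have hsub : Set.uIcc s t ⊆ Set.Ico 0 T := by
    rw [Set.uIcc_of_le hst]
    exact fun u hu => ⟨hs.trans hu.1, lt_of_le_of_lt hu.2 ht⟩
  refine Matrix.posSemidef_iff_dotProduct_mulVec.mpr ⟨?_, ?_⟩
  · ext i j
    simp only [Matrix.conjTranspose_apply, Matrix.of_apply]
    rw [RCLike.star_def, conj_intervalIntegral']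
    refine intervalIntegral.integral_congr fun u hu => ?_
    have h := (hΓpsd u (hsub hu)).1
    calc (starRingEnd ℂ) (Γ u j i) = (Γ u)ᴴ i j := rfl
      _ = Γ u i j := by rw [h]
  · intro x
    rw [quad_integral' Γ hΓcont hs hst ht x]
    have hcont : ContinuousOn (fun u => star x ⬝ᵥ (Γ u) *ᵥ x) (Set.uIcc s t) := by
      have heq : (fun u => star x ⬝ᵥ (Γ u) *ᵥ x)
          = fun u => ∑ i, star (x i) * ∑ j, Γ u i j * x j := by
        funext u; simp [dotProduct, Matrix.mulVec]
      rw [heq]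
      exact continuousOn_finset_sum _ fun i _ => continuousOn_const.mul
        (continuousOn_finset_sum _ fun j _ => ((hΓcont i j).mono hsub).mul continuousOn_const)
    have hfint : IntervalIntegrable (fun u => star x ⬝ᵥ (Γ u) *ᵥ x) volume s t :=
      hcont.intervalIntegrable
    rw [Complex.nonneg_iff]
    constructor
    · rw [re_intervalIntegral' _ hfint]
      refine intervalIntegral.integral_nonneg hst fun u hu => ?_
      have h0 := (hΓpsd u (hsub (by rwa [Set.uIcc_of_le hst]))).dotProduct_mulVec_nonneg x
      exact (Complex.nonneg_iff.1 h0).1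
    · rw [im_intervalIntegral' _ hfint]
      symm
      have : ∫ u in s..t, (star x ⬝ᵥ (Γ u) *ᵥ x).im = ∫ u in s..t, (0:ℝ) := by
        refine intervalIntegral.integral_congr fun u hu => ?_
        have h0 := (hΓpsd u (hsub hu)).dotProduct_mulVec_nonneg x
        exact ((Complex.nonneg_iff.1 h0).2).symm
      rw [this]
      simp

theorem stmt_8 (k : ℕ) (T : ℝ) (hT : 0 < T)
    (Γ : ℝ → Matrix (Fin k) (Fin k) ℂ)
    (hΓcont : ∀ i j, ContinuousOn (fun t => Γ t i j) (Set.Ico 0 T))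
    (hΓpsd : ∀ t ∈ Set.Ico (0:ℝ) T, (Γ t).PosSemidef)
    (H₀ : Matrix (Fin k) (Fin k) ℂ) (hH₀ : H₀.PosDef)
    (H : ℝ → Matrix (Fin k) (Fin k) ℂ)
    (hH : ∀ t, H t = (H₀⁻¹ + Matrix.of fun i j => ∫ u in (0:ℝ)..t, Γ u i j)⁻¹) :
    ∀ v : Fin k → ℂ,
      AntitoneOn (fun t => (star v ⬝ᵥ (H t).mulVec v).re) (Set.Ico 0 T) := by
  intro v s hs t ht hst
  obtain ⟨hs0, hsT⟩ := hs
  obtain ⟨ht0, htT⟩ := ht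
  -- integrability of entries on subintervals
  have hint : ∀ (a b : ℝ), 0 ≤ a → a ≤ b → b < T →
      ∀ i j, IntervalIntegrable (fun u => Γ u i j) volume a b := by
    intro a b ha hab hb i j
    refine ((hΓcont i j).mono ?_).intervalIntegrable
    rw [Set.uIcc_of_le hab]
    exact fun u hu => ⟨ha.trans hu.1, lt_of_le_of_lt hu.2 hb⟩
  -- the matrix A = H₀⁻¹ + ∫₀ˢ Γ is positive definite
  have hA : (H₀⁻¹ + Matrix.of fun i j => ∫ u in (0:ℝ)..s, Γ u i j).PosDef :=
    hH₀.inv.add_posSemidef (integral_psd' Γ hΓcont hΓpsd le_rfl hs0 hsT)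
  have hP : (Matrix.of fun i j => ∫ u in s..t, Γ u i j :
      Matrix (Fin k) (Fin k) ℂ).PosSemidef :=
    integral_psd' Γ hΓcont hΓpsd hs0 hst htT
  -- splitting of the integral
  have hsplit : (Matrix.of fun i j => ∫ u in (0:ℝ)..t, Γ u i j :
      Matrix (Fin k) (Fin k) ℂ)
      = (Matrix.of fun i j => ∫ u in (0:ℝ)..s, Γ u i j)
        + (Matrix.of fun i j => ∫ u in s..t, Γ u i j) := by
    ext i j
    simp only [Matrix.add_apply, Matrix.of_apply]
    exact (intervalIntegral.integral_add_adjacent_intervals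
      (hint 0 s le_rfl hs0 hsT i j) (hint s t hs0 hst htT i j)).symm
  have hdiff : (H s - H t).PosSemidef := by
    rw [hH s, hH t, hsplit, ← add_assoc]
    exact inv_sub_inv_psd' _ _ hA hP
  have h0 := hdiff.dotProduct_mulVec_nonneg v
  have hre := (Complex.nonneg_iff.1 h0).1
  simp only [Matrix.sub_mulVec, dotProduct_sub, Complex.sub_re, Complex.zero_re] at hre
  linarith
end

section
/- Let Γ : [0,T) → Matrix (Fin k) (Fin k) ℂ be continuous with Γ(t) Hermitian positive semidefinite, H₀ Hermitian positive definite, and H(t) := (H₀⁻¹ + ∫₀ᵗ Γ(u) du)⁻¹. Then for every v ∈ ℂᵏ the limit lim_{t→T⁻} v* H(t) v exists and is a nonnegative real number. -/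
open Matrix Filter MeasureTheory
open scoped ComplexOrder Topology

private lemma var_key {k : ℕ} (B : Matrix (Fin k) (Fin k) ℂ) (hB : B.PosDef) (x w : Fin k → ℂ) :
    star x ⬝ᵥ w + star w ⬝ᵥ x - star w ⬝ᵥ B *ᵥ w ≤ star x ⬝ᵥ B⁻¹ *ᵥ x := by
  have hd : IsUnit B.det := (Matrix.isUnit_iff_isUnit_det _).1 hB.isUnit
  have h1 : B⁻¹ * B = 1 := Matrix.nonsing_inv_mul B hd
  have h2 : B * B⁻¹ = 1 := Matrix.mul_nonsing_inv B hd
  have h0 := hB.inv.posSemidef.dotProduct_mulVec_nonneg (x - B *ᵥ w)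
  rw [← sub_nonneg]
  convert h0 using 1
  have hs : star (x - B *ᵥ w) = star x - star w ᵥ* B := by
    rw [star_sub, star_mulVec, hB.isHermitian.eq]
  rw [mulVec_sub, dotProduct_sub, hs, sub_dotProduct, sub_dotProduct,
    mulVec_mulVec, h1, one_mulVec]
  have e1 : (star w ᵥ* B) ⬝ᵥ (B⁻¹ *ᵥ x) = star w ⬝ᵥ x := by
    rw [dotProduct_mulVec, vecMul_vecMul, h2, vecMul_one]
  have e2 : (star w ᵥ* B) ⬝ᵥ w = star w ⬝ᵥ B *ᵥ w := by
    rw [dotProduct_mulVec]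
  rw [e1, e2]
  ring

private lemma eq_key {k : ℕ} (B : Matrix (Fin k) (Fin k) ℂ) (hB : B.PosDef) (x : Fin k → ℂ) :
    star x ⬝ᵥ B⁻¹ *ᵥ x =
      star x ⬝ᵥ (B⁻¹ *ᵥ x) + star (B⁻¹ *ᵥ x) ⬝ᵥ x - star (B⁻¹ *ᵥ x) ⬝ᵥ B *ᵥ (B⁻¹ *ᵥ x) := by
  have hd : IsUnit B.det := (Matrix.isUnit_iff_isUnit_det _).1 hB.isUnit
  have h2 : B * B⁻¹ = 1 := Matrix.mul_nonsing_inv B hd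
  rw [mulVec_mulVec, h2, one_mulVec]
  ring

private lemma quad_int {k : ℕ} (f : ℝ → Matrix (Fin k) (Fin k) ℂ) (s t : ℝ)
    (hint : ∀ i j, IntervalIntegrable (fun u => f u i j) volume s t) (w : Fin k → ℂ) :
    star w ⬝ᵥ (Matrix.of fun i j => ∫ u in s..t, f u i j) *ᵥ w
      = ∫ u in s..t, star w ⬝ᵥ (f u) *ᵥ w := by
  have h1 : ∀ i j : Fin k, IntervalIntegrable (fun u => star w i * (f u i j * w j)) volume s t :=
    fun i j => ((hint i j).mul_const _).const_mul _
  have h2 : ∀ i : Fin k, IntervalIntegrable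
      (fun u => ∑ j, star w i * (f u i j * w j)) volume s t := by
    intro i
    have h := IntervalIntegrable.sum (μ := volume) (a := s) (b := t)
      Finset.univ (fun j _ => h1 i j)
    rwa [Finset.sum_fn] at h
  simp only [dotProduct, mulVec, Matrix.of_apply, Finset.mul_sum]
  rw [intervalIntegral.integral_finset_sum (fun i _ => h2 i)]
  refine Finset.sum_congr rfl fun i _ => ?_
  rw [intervalIntegral.integral_finset_sum (fun j _ => h1 i j)]
  refine Finset.sum_congr rfl fun j _ => ?_
  rw [← intervalIntegral.integral_mul_const, ← intervalIntegral.integral_const_mul]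

theorem stmt_9 (k : ℕ) (T : ℝ) (hT : 0 < T)
    (Γ : ℝ → Matrix (Fin k) (Fin k) ℂ)
    (hΓcont : ∀ i j, ContinuousOn (fun t => Γ t i j) (Set.Ico 0 T))
    (hΓpsd : ∀ t ∈ Set.Ico (0:ℝ) T, (Γ t).PosSemidef)
    (H₀ : Matrix (Fin k) (Fin k) ℂ) (hH₀ : H₀.PosDef)
    (H : ℝ → Matrix (Fin k) (Fin k) ℂ)
    (hH : ∀ t, H t = (H₀⁻¹ + Matrix.of fun i j => ∫ u in (0:ℝ)..t, Γ u i j)⁻¹) :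
    ∀ v : Fin k → ℂ, ∃ c : ℝ, 0 ≤ c ∧
      Tendsto (fun t => star v ⬝ᵥ (H t).mulVec v)
        (nhdsWithin T (Set.Iio T)) (nhds (c : ℂ)) := by
  intro v
  set A : ℝ → Matrix (Fin k) (Fin k) ℂ :=
    fun t => Matrix.of fun i j => ∫ u in (0:ℝ)..t, Γ u i j with hAdef
  set M : ℝ → Matrix (Fin k) (Fin k) ℂ := fun t => H₀⁻¹ + A t with hMdef
  have hHM : ∀ t, H t = (M t)⁻¹ := by
    intro t; simp only [hMdef, hAdef]; exact hH t
  -- integrability of the entries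
  have hint : ∀ (i j : Fin k) (s t : ℝ), 0 ≤ s → s ≤ t → t < T →
      IntervalIntegrable (fun u => Γ u i j) volume s t := by
    intro i j s t hs hst ht
    apply ContinuousOn.intervalIntegrable
    apply (hΓcont i j).mono
    rw [Set.uIcc_of_le hst]
    exact fun u hu => ⟨hs.trans hu.1, lt_of_le_of_lt hu.2 ht⟩
  -- quadratic form increments are nonnegative reals
  have hqdiff : ∀ (w : Fin k → ℂ) (s t : ℝ), 0 ≤ s → s ≤ t → t < T →
      ∃ r : ℝ, 0 ≤ r ∧
        star w ⬝ᵥ (A t) *ᵥ w - star w ⬝ᵥ (A s) *ᵥ w = (r : ℂ) := by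
    intro w s t hs hst ht
    have hAsub : A t - A s = Matrix.of fun i j => ∫ u in s..t, Γ u i j := by
      ext i j
      simp only [hAdef, Matrix.sub_apply, Matrix.of_apply]
      exact intervalIntegral.integral_interval_sub_left
        (hint i j 0 t le_rfl (hs.trans hst) ht) (hint i j 0 s le_rfl hs (lt_of_le_of_lt hst ht))
    have hsub : star w ⬝ᵥ (A t) *ᵥ w - star w ⬝ᵥ (A s) *ᵥ w
        = ∫ u in s..t, star w ⬝ᵥ (Γ u) *ᵥ w := by
      rw [← dotProduct_sub, ← Matrix.sub_mulVec, hAsub]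
      exact quad_int Γ s t (fun i j => hint i j s t hs hst ht) w
    have hreal : ∀ u ∈ Set.uIcc s t,
        star w ⬝ᵥ (Γ u) *ᵥ w = (((star w ⬝ᵥ (Γ u) *ᵥ w).re : ℝ) : ℂ) := by
      intro u hu
      rw [Set.uIcc_of_le hst] at hu
      have hpsd := (hΓpsd u ⟨hs.trans hu.1, lt_of_le_of_lt hu.2 ht⟩).dotProduct_mulVec_nonneg w
      have him := (Complex.le_def.1 hpsd).2
      exact Complex.ext (by simp) (by simp [← him])
    refine ⟨∫ u in s..t, (star w ⬝ᵥ (Γ u) *ᵥ w).re, ?_, ?_⟩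
    · apply intervalIntegral.integral_nonneg hst
      intro u hu
      have hpsd := (hΓpsd u ⟨hs.trans hu.1, lt_of_le_of_lt hu.2 ht⟩).dotProduct_mulVec_nonneg w
      simpa using (Complex.le_def.1 hpsd).1
    · rw [hsub, intervalIntegral.integral_congr hreal]
      exact RCLike.intervalIntegral_ofReal
  -- A 0 = 0 and A t is positive semidefinite
  have hA0 : ∀ w : Fin k → ℂ, star w ⬝ᵥ (A 0) *ᵥ w = 0 := by
    intro w
    have : A 0 = 0 := by
      ext i j; simp [hAdef]
    rw [this, Matrix.zero_mulVec, dotProduct_zero]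
  have hApsd : ∀ t, 0 ≤ t → t < T → (A t).PosSemidef := by
    intro t h0t htT
    refine .of_dotProduct_mulVec_nonneg ?_ ?_
    · ext i j
      simp only [conjTranspose_apply, hAdef, Matrix.of_apply]
      rw [show (star (∫ u in (0:ℝ)..t, Γ u j i) : ℂ)
          = (starRingEnd ℂ) (∫ u in (0:ℝ)..t, Γ u j i) from rfl]
      rw [show ((starRingEnd ℂ) (∫ u in (0:ℝ)..t, Γ u j i))
          = ∫ u in (0:ℝ)..t, (starRingEnd ℂ) (Γ u j i) by
        simp only [intervalIntegral, map_sub, ← integral_conj]]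
      apply intervalIntegral.integral_congr
      intro u hu
      rw [Set.uIcc_of_le h0t] at hu
      have hherm := (hΓpsd u ⟨hu.1, lt_of_le_of_lt hu.2 htT⟩).1
      have hij := congrFun (congrFun hherm i) j
      simpa [Matrix.conjTranspose_apply] using hij
    · intro w
      obtain ⟨r, hr, heq⟩ := hqdiff w 0 t le_rfl h0t htT
      rw [hA0 w, sub_zero] at heq
      rw [heq]
      exact_mod_cast hr
  have hMpd : ∀ t, 0 ≤ t → t < T → (M t).PosDef :=
    fun t h1 h2 => hH₀.inv.add_posSemidef (hApsd t h1 h2)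
  -- the quadratic form is antitone
  have hFanti : ∀ s t : ℝ, 0 ≤ s → s ≤ t → t < T →
      star v ⬝ᵥ (H t) *ᵥ v ≤ star v ⬝ᵥ (H s) *ᵥ v := by
    intro s t hs hst ht
    have hsT : s < T := lt_of_le_of_lt hst ht
    have hMs := hMpd s hs hsT
    have hMt := hMpd t (hs.trans hst) ht
    set w := (M t)⁻¹ *ᵥ v with hw
    have e1 : star v ⬝ᵥ (H t) *ᵥ v
        = star v ⬝ᵥ w + star w ⬝ᵥ v - star w ⬝ᵥ (M t) *ᵥ w := by
      rw [hHM t]; exact eq_key _ hMt v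
    have hle : star w ⬝ᵥ (M s) *ᵥ w ≤ star w ⬝ᵥ (M t) *ᵥ w := by
      rw [← sub_nonneg]
      have hdiff : star w ⬝ᵥ (M t) *ᵥ w - star w ⬝ᵥ (M s) *ᵥ w
          = star w ⬝ᵥ (A t) *ᵥ w - star w ⬝ᵥ (A s) *ᵥ w := by
        simp only [hMdef, Matrix.add_mulVec, dotProduct_add]
        ring
      obtain ⟨r, hr, heq⟩ := hqdiff w s t hs hst ht
      rw [hdiff, heq]
      exact_mod_cast hr
    calc star v ⬝ᵥ (H t) *ᵥ v
        ≤ star v ⬝ᵥ w + star w ⬝ᵥ v - star w ⬝ᵥ (M s) *ᵥ w := by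
          rw [e1]; exact sub_le_sub_left hle _
      _ ≤ star v ⬝ᵥ (M s)⁻¹ *ᵥ v := var_key _ hMs v w
      _ = star v ⬝ᵥ (H s) *ᵥ v := by rw [hHM s]
  -- the quadratic form is a nonnegative real on [0, T)
  have hFreal : ∀ t ∈ Set.Ioo (0:ℝ) T,
      star v ⬝ᵥ (H t) *ᵥ v = (((star v ⬝ᵥ (H t) *ᵥ v).re : ℝ) : ℂ)
        ∧ 0 ≤ (star v ⬝ᵥ (H t) *ᵥ v).re := by
    intro t ht
    have hpsd : (0:ℂ) ≤ star v ⬝ᵥ (H t) *ᵥ v := by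
      rw [hHM t]
      exact ((hMpd t ht.1.le ht.2).inv.posSemidef).dotProduct_mulVec_nonneg v
    have h1 := (Complex.le_def.1 hpsd).1
    have h2 := (Complex.le_def.1 hpsd).2
    exact ⟨Complex.ext (by simp) (by simp [← h2]), by simpa using h1⟩
  set g : ℝ → ℝ := fun t => (star v ⬝ᵥ (H t) *ᵥ v).re with hg
  have hganti : AntitoneOn g (Set.Ioo 0 T) := by
    intro s hs t ht hst
    exact (Complex.le_def.1 (hFanti s t hs.1.le hst ht.2)).1
  have hne : (Set.Ioo (0:ℝ) T).Nonempty := Set.nonempty_Ioo.2 hT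
  have hbdd : BddBelow (g '' Set.Ioo 0 T) := by
    refine ⟨0, fun y hy => ?_⟩
    obtain ⟨t, ht, rfl⟩ := hy
    exact (hFreal t ht).2
  refine ⟨sInf (g '' Set.Ioo 0 T), ?_, ?_⟩
  · refine le_csInf (hne.image g) fun y hy => ?_
    obtain ⟨t, ht, rfl⟩ := hy
    exact (hFreal t ht).2
  · have hgt := AntitoneOn.tendsto_nhdsWithin_Ioo_left hne hganti hbdd
    have h2 : Tendsto (fun t => ((g t : ℝ) : ℂ)) (𝓝[<] T)
        (𝓝 ((sInf (g '' Set.Ioo 0 T) : ℝ) : ℂ)) :=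
      (Complex.continuous_ofReal.tendsto _).comp hgt
    refine h2.congr' ?_
    filter_upwards [Ioo_mem_nhdsLT hT] with t ht
    exact ((hFreal t ht).1).symm
end

section
/- Let Θ be an invertible Hermitian positive semidefinite k×k complex matrix (hence positive definite). Then for every λ > 0, the pair (H, h) with H = (1/(4λ)) Θ⁻¹ and h₁ = ⋯ = h_s = 1/(2λ) is the unique solution with H Hermitian positive definite and all hᵢ > 0 of the static system: λ H = H Θ' H and λ hᵢ = 1/2 for i = 1,…,s, where Θ' := (1/h₁²)Γ¹ + ⋯ + (1/h_s²)Γˢ and Θ = Γ¹ + ⋯ + Γˢ. -/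
open Matrix
open scoped ComplexOrder

lemma posDef_smul_aux {k : ℕ} {M : Matrix (Fin k) (Fin k) ℂ} (hM : M.PosDef)
    {c : ℝ} (hc : 0 < c) : ((c : ℂ) • M).PosDef := by
  refine Matrix.PosDef.of_dotProduct_mulVec_pos ?_ (fun x hx => ?_)
  · unfold Matrix.IsHermitian
    rw [conjTranspose_smul, hM.isHermitian.eq]
    simp [Complex.conj_ofReal]
  · rw [smul_mulVec, dotProduct_smul]
    have h1 : (0:ℂ) < (c:ℂ) := by exact_mod_cast hc
    have h2 := hM.dotProduct_mulVec_pos hx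
    simpa using mul_pos h1 h2

lemma posDef_of_psd_isUnit {k : ℕ} {M : Matrix (Fin k) (Fin k) ℂ}
    (h1 : M.PosSemidef) (h2 : IsUnit M) : M.PosDef := by
  refine Matrix.PosDef.of_dotProduct_mulVec_pos h1.isHermitian fun x hx => ?_
  rcases (h1.dotProduct_mulVec_nonneg x).lt_or_eq with h | h
  · exact h
  · exfalso
    have h0 := (h1.dotProduct_mulVec_zero_iff x).mp h.symm
    have hinj := Matrix.mulVec_injective_iff_isUnit.mpr h2
    exact hx (hinj (by simpa using h0))

theorem stmt_10 (k s : ℕ) (hs : 0 < s)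
    (Γ : Fin s → Matrix (Fin k) (Fin k) ℂ) (hΓ : ∀ j, (Γ j).PosSemidef)
    (Θ : Matrix (Fin k) (Fin k) ℂ) (hΘ : Θ = ∑ j, Γ j)
    (hΘinv : IsUnit Θ) (l : ℝ) (hl : 0 < l) :
    (((1/(4*l) : ℝ) : ℂ) • Θ⁻¹).PosDef ∧
    ∀ (H : Matrix (Fin k) (Fin k) ℂ) (h : Fin s → ℝ),
      H.PosDef → (∀ i, 0 < h i) →
      ((((l : ℝ) : ℂ) • H = H * (∑ j, ((1/(h j)^2 : ℝ) : ℂ) • Γ j) * H ∧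
          ∀ i, l * h i = 1/2) ↔
        (H = ((1/(4*l) : ℝ) : ℂ) • Θ⁻¹ ∧ ∀ i, h i = 1/(2*l))) := by
  have hΘpsd : Θ.PosSemidef := by
    rw [hΘ]
    exact Finset.sum_induction _ _ (fun a b ha hb => ha.add hb)
      Matrix.PosSemidef.zero (fun j _ => hΓ j)
  have hΘpd : Θ.PosDef := posDef_of_psd_isUnit hΘpsd hΘinv
  have hl4 : (0:ℝ) < 1/(4*l) := by positivity
  refine ⟨posDef_smul_aux hΘpd.inv hl4, fun H h hH hh => ?_⟩
  have hHunit : IsUnit H := hH.isUnit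
  have hsum : ∀ (c : Fin s → ℝ), (∀ i, c i = 1/(2*l)) →
      (∑ j, ((1/(c j)^2 : ℝ) : ℂ) • Γ j) = ((4*l^2 : ℝ) : ℂ) • Θ := by
    intro c hc
    rw [hΘ, Finset.smul_sum]
    refine Finset.sum_congr rfl fun j _ => ?_
    rw [hc j]
    congr 1
    have : (1 / ((1:ℝ)/(2*l))^2) = 4*l^2 := by
      field_simp; ring
    rw [this]
  constructor
  · rintro ⟨heq, hhalf⟩
    have hc : ∀ i, h i = 1/(2*l) := by
      intro i
      have := hhalf i
      field_simp at this ⊢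
      linarith
    refine ⟨?_, hc⟩
    rw [hsum h hc, Matrix.mul_smul, Matrix.smul_mul] at heq
    set c : ℂ := ((4*l^2 : ℝ) : ℂ) with hcdef
    have hc0 : c ≠ 0 := Complex.ofReal_ne_zero.mpr (by positivity)
    have hdet : IsUnit H.det := (Matrix.isUnit_iff_isUnit_det H).mp hHunit
    have hΘdet : IsUnit Θ.det := (Matrix.isUnit_iff_isUnit_det Θ).mp hΘinv
    have hstep : H * Θ * H = (c⁻¹ * ((l:ℝ):ℂ)) • H := by
      have h2 := congrArg (fun M => c⁻¹ • M) heq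
      simp only [smul_smul] at h2
      rw [inv_mul_cancel₀ hc0, one_smul] at h2
      exact h2.symm
    have hΘH : Θ * H = (c⁻¹ * ((l:ℝ):ℂ)) • 1 := by
      calc Θ * H = H⁻¹ * H * (Θ * H) := by
            rw [Matrix.nonsing_inv_mul H hdet, Matrix.one_mul]
        _ = H⁻¹ * (H * Θ * H) := by simp only [Matrix.mul_assoc]
        _ = H⁻¹ * ((c⁻¹ * ((l:ℝ):ℂ)) • H) := by rw [hstep]
        _ = (c⁻¹ * ((l:ℝ):ℂ)) • (H⁻¹ * H) := by rw [Matrix.mul_smul]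
        _ = (c⁻¹ * ((l:ℝ):ℂ)) • 1 := by rw [Matrix.nonsing_inv_mul H hdet]
    have hscal : c⁻¹ * ((l:ℝ):ℂ) = ((1/(4*l) : ℝ) : ℂ) := by
      rw [hcdef]
      have h1 : ((4*l^2:ℝ):ℂ) ≠ 0 := Complex.ofReal_ne_zero.mpr (by positivity)
      have h2 : ((4*l:ℝ):ℂ) ≠ 0 := Complex.ofReal_ne_zero.mpr (by positivity)
      push_cast at h1 h2 ⊢
      field_simp
    calc H = Θ⁻¹ * (Θ * H) := by
          rw [← Matrix.mul_assoc, Matrix.nonsing_inv_mul Θ hΘdet, Matrix.one_mul]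
      _ = (c⁻¹ * ((l:ℝ):ℂ)) • (Θ⁻¹ * 1) := by rw [hΘH, Matrix.mul_smul]
      _ = ((1/(4*l) : ℝ) : ℂ) • Θ⁻¹ := by rw [Matrix.mul_one, hscal]
  · rintro ⟨hHeq, hc⟩
    have hΘdet : IsUnit Θ.det := (Matrix.isUnit_iff_isUnit_det Θ).mp hΘinv
    refine ⟨?_, fun i => by rw [hc i]; field_simp⟩
    rw [hsum h hc, hHeq]
    have hΘΘ : Θ⁻¹ * (Θ * Θ⁻¹) = Θ⁻¹ := by
      rw [← Matrix.mul_assoc, Matrix.nonsing_inv_mul Θ hΘdet, Matrix.one_mul]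
    simp only [Matrix.smul_mul, Matrix.mul_smul, smul_smul, Matrix.mul_assoc]
    rw [hΘΘ]
    congr 1
    push_cast
    field_simp
end

section
/- Let A > 0, Θ Hermitian positive definite k×k, H₀ Hermitian positive definite, n₁,…,n_s positive integers, m := k + Σ nᵢ, V > 0 a constant, H(t) := (H₀⁻¹ + (2t/(A(2A−t)))Θ)⁻¹, hᵢ(t) := A − t/2, and c(t) := (V · det H(t) · Π (2A−t)^{nᵢ})^{−1/m}. Then lim_{t→2A} c(t)·hᵢ(t) = ξ/2 for each i and lim_{t→2A} c(t)·H(t) = (ξ/4)Θ⁻¹, where ξ := (V⁻¹ 4^k det Θ)^{1/m} > 0. -/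
open Matrix Filter
open scoped ComplexOrder Topology

private lemma posDef_real_smul {k : ℕ} {P : Matrix (Fin k) (Fin k) ℂ} (hP : P.PosDef)
    {t : ℝ} (ht : 0 < t) : (((t : ℝ) : ℂ) • P).PosDef := by
  refine ⟨?_, fun x hx => ?_⟩
  · show (((t : ℝ) : ℂ) • P)ᴴ = _
    rw [conjTranspose_smul, hP.1.eq]
    congr 1
    simp [Complex.star_def, Complex.conj_ofReal]
  · have := mul_pos (Complex.zero_lt_real.mpr ht) (hP.2 hx)
    simpa [Matrix.smul_apply, Finsupp.mul_sum, mul_assoc, mul_left_comm] using this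

theorem stmt_14 (k s : ℕ) (hs : 0 < s) (A : ℝ) (hA : 0 < A)
    (Θ : Matrix (Fin k) (Fin k) ℂ) (hΘ : Θ.PosDef)
    (H₀ : Matrix (Fin k) (Fin k) ℂ) (hH₀ : H₀.PosDef)
    (n : Fin s → ℕ) (hn : ∀ i, 0 < n i) (m : ℕ) (hm : m = k + ∑ i, n i)
    (V : ℝ) (hV : 0 < V)
    (H : ℝ → Matrix (Fin k) (Fin k) ℂ)
    (hH : ∀ t, H t = (H₀⁻¹ + ((2*t/(A*(2*A - t)) : ℝ) : ℂ) • Θ)⁻¹)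
    (h : Fin s → ℝ → ℝ) (hh : ∀ i t, h i t = A - t/2)
    (c : ℝ → ℝ)
    (hc : ∀ t, c t = (V * ((H t).det).re * ∏ i, (2*A - t)^(n i)) ^
      (-(1/(m : ℝ))))
    (ξ : ℝ) (hξ : ξ = (V⁻¹ * 4^k * Θ.det.re) ^ (1/(m : ℝ))) :
    0 < ξ ∧
    (∀ i, Tendsto (fun t => c t * h i t)
      (nhdsWithin (2*A) (Set.Iio (2*A))) (nhds (ξ/2))) ∧
    (∀ i j, Tendsto (fun t => ((c t : ℝ) : ℂ) * H t i j)
      (nhdsWithin (2*A) (Set.Iio (2*A))) (nhds ((((ξ/4 : ℝ) : ℂ) • Θ⁻¹) i j))) := by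
  have hFin : Nonempty (Fin s) := Fin.pos_iff_nonempty.mp hs
  have hN : 0 < ∑ i, n i := Finset.sum_pos (fun i _ => hn i) Finset.univ_nonempty
  have hm0 : 0 < m := by omega
  have hmR : (m : ℝ) ≠ 0 := Nat.cast_ne_zero.mpr hm0.ne'
  set l := nhdsWithin (2*A) (Set.Iio (2*A)) with hl
  set r : ℝ → ℝ := fun t => A*(2*A - t)/(2*t) with hr
  set M : ℝ → Matrix (Fin k) (Fin k) ℂ := fun t => ((r t : ℝ) : ℂ) • H₀⁻¹ + Θ with hM'
  set d : ℝ → ℝ := fun t => ((M t).det).re with hd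
  set φ : ℝ → ℝ := fun t => (V * (A/(2*t))^k * (d t)⁻¹) ^ (-(1/(m : ℝ))) with hφ
  have hA2 : (0 : ℝ) < 2*A := by linarith
  have h2A : (2 : ℝ) * (2*A) ≠ 0 := by positivity
  -- continuity facts
  have hrc : ContinuousAt r (2*A) := by
    apply ContinuousAt.div (by fun_prop) (by fun_prop) h2A
  have hr2A : r (2*A) = 0 := by simp [hr]
  have hMc : Tendsto M l (𝓝 Θ) := by
    have h1 : ContinuousAt M (2*A) := by
      exact ((Complex.continuous_ofReal.continuousAt.comp hrc).smul
        continuousAt_const).add continuousAt_const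
    have h2 : M (2*A) = Θ := by simp [hM', hr2A]
    exact h2 ▸ h1.tendsto.mono_left nhdsWithin_le_nhds
  have hdetc : Tendsto (fun t => (M t).det) l (𝓝 Θ.det) :=
    ((continuous_id.matrix_det).tendsto Θ).comp hMc
  have hdc : Tendsto d l (𝓝 Θ.det.re) := (Complex.continuous_re.tendsto _).comp hdetc
  have hDpos : 0 < Θ.det.re := by simpa using (Complex.lt_def.mp hΘ.det_pos).1
  have hΘdet0 : Θ.det ≠ 0 := hΘ.det_pos.ne'
  have hAdiv : Tendsto (fun t => A/(2*t)) l (𝓝 (4⁻¹ : ℝ)) := by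
    have h1 : ContinuousAt (fun t : ℝ => A/(2*t)) (2*A) :=
      ContinuousAt.div (by fun_prop) (by fun_prop) h2A
    have h2 : A/(2*(2*A)) = (4⁻¹ : ℝ) := by
      rw [div_eq_iff h2A]
      ring
    exact h2 ▸ h1.tendsto.mono_left nhdsWithin_le_nhds
  set L : ℝ := V * (4⁻¹ : ℝ)^k * (Θ.det.re)⁻¹ with hL'
  have hL : 0 < L := by
    apply mul_pos (mul_pos hV (by positivity)) (inv_pos.mpr hDpos)
  have hbase : Tendsto (fun t => V * (A/(2*t))^k * (d t)⁻¹) l (𝓝 L) :=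
    ((tendsto_const_nhds.mul (hAdiv.pow k)).mul (hdc.inv₀ hDpos.ne'))
  have hξeq : ξ = L ^ (-(1/(m:ℝ))) := by
    have hLinv : V⁻¹ * 4^k * Θ.det.re = L⁻¹ := by
      rw [hL', mul_inv, mul_inv, inv_inv, inv_pow, inv_inv]
    rw [hξ, hLinv, Real.inv_rpow hL.le, ← Real.rpow_neg hL.le]
  have hφlim : Tendsto φ l (𝓝 ξ) := by
    rw [hξeq]
    exact hbase.rpow_const (Or.inl hL.ne')
  have hξpos : 0 < ξ := hξeq ▸ Real.rpow_pos_of_pos hL _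
  -- eventual membership
  have hev : ∀ᶠ t in l, t ∈ Set.Ioo A (2*A) := by
    filter_upwards [mem_nhdsWithin_of_mem_nhds (Ioi_mem_nhds (show A < 2*A by linarith)),
      self_mem_nhdsWithin] with t h1 h2
    exact ⟨h1, h2⟩
  -- pointwise key identities
  have key : ∀ t ∈ Set.Ioo A (2*A),
      c t = φ t * (2*A - t)⁻¹ ∧ H t = ((r t : ℝ) : ℂ) • (M t)⁻¹ := by
    intro t ht
    obtain ⟨ht1, ht2⟩ := ht
    have hu : 0 < 2*A - t := by linarith
    have htpos : 0 < t := by linarith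
    set g : ℝ := 2*t/(A*(2*A - t)) with hg
    have hgpos : 0 < g := by positivity
    have hrg : r t = g⁻¹ := by rw [hg, inv_div]
    have hrpos : 0 < r t := by rw [hrg]; exact inv_pos.mpr hgpos
    have hMpd : (M t).PosDef := (posDef_real_smul hH₀.inv hrpos).add hΘ
    have hMlt := Complex.lt_def.mp hMpd.det_pos
    have hdpos : 0 < d t := by simpa [hd] using hMlt.1
    have hdet : (M t).det = ((d t : ℝ) : ℂ) := by
      apply Complex.ext
      · simp [hd]
      · simp [← hMlt.2]
    have hgr : ((g : ℝ) : ℂ) * ((r t : ℝ) : ℂ) = 1 := by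
      rw [← Complex.ofReal_mul, hrg, mul_inv_cancel₀ hgpos.ne']
      norm_num
    have hsmul : H₀⁻¹ + ((g : ℝ) : ℂ) • Θ = ((g : ℝ) : ℂ) • M t := by
      rw [hM']
      rw [smul_add, smul_smul, hgr, one_smul]
    have hMdet0 : (M t).det ≠ 0 := by
      rw [hdet]
      exact_mod_cast hdpos.ne'
    have hHt : H t = ((r t : ℝ) : ℂ) • (M t)⁻¹ := by
      rw [hH t, ← hg, hsmul]
      apply inv_eq_right_inv
      rw [Matrix.smul_mul, Matrix.mul_smul, smul_smul, hgr, one_smul,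
        Matrix.mul_nonsing_inv _ (isUnit_iff_ne_zero.mpr hMdet0)]
    have hdetH : (H t).det.re = (g^k * d t)⁻¹ := by
      rw [hH t, ← hg, hsmul, Matrix.det_nonsing_inv, Matrix.det_smul, hdet,
        Ring.inverse_eq_inv, Fintype.card_fin, ← Complex.ofReal_pow, ← Complex.ofReal_mul,
        ← Complex.ofReal_inv, Complex.ofReal_re]
    have hc' : c t = φ t * (2*A - t)⁻¹ := by
      rw [hc t, Finset.prod_pow_eq_pow_sum, hdetH]
      have hbase_eq : V * (g^k * d t)⁻¹ * (2*A - t)^(∑ i, n i)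
          = (V * (A/(2*t))^k * (d t)⁻¹) * (2*A - t)^m := by
        rw [hm, pow_add]
        have hginv : g⁻¹ = (A/(2*t)) * (2*A - t) := by
          rw [hg, inv_div]
          ring
        rw [mul_inv, ← inv_pow, hginv, mul_pow]
        ring
      have hpos1 : 0 < V * (A/(2*t))^k * (d t)⁻¹ :=
        mul_pos (mul_pos hV (pow_pos (div_pos hA (by linarith)) k)) (inv_pos.mpr hdpos)
      rw [hbase_eq, Real.mul_rpow hpos1.le (by positivity), hφ]
      congr 1
      rw [← Real.rpow_natCast (2*A - t) m, ← Real.rpow_mul hu.le,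
        show (m:ℝ) * (-(1/(m:ℝ))) = -1 by field_simp,
        Real.rpow_neg_one]
    exact ⟨hc', hHt⟩
  refine ⟨hξpos, fun i => ?_, fun i j => ?_⟩
  · apply Tendsto.congr' ?_ (hφlim.div_const 2)
    filter_upwards [hev] with t ht
    obtain ⟨hc', _⟩ := key t ht
    have hu : (2*A - t) ≠ 0 := by have := ht.2; intro hh'; simp at ht; linarith [ht.2]
    rw [hc', hh i t]
    field_simp
  · have hsc : Tendsto (fun t => φ t * (A/(2*t))) l (𝓝 (ξ * 4⁻¹)) := hφlim.mul hAdiv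
    have hinv_eq : ∀ (B : Matrix (Fin k) (Fin k) ℂ), B⁻¹ i j = (B.det)⁻¹ * B.adjugate i j := by
      intro B
      rw [Matrix.inv_def, Ring.inverse_eq_inv, Matrix.smul_apply, smul_eq_mul]
    have hadjc : Tendsto (fun t => (M t).adjugate i j) l (𝓝 (Θ.adjugate i j)) := by
      have hcont : Continuous fun B : Matrix (Fin k) (Fin k) ℂ => B.adjugate i j :=
        (continuous_apply j).comp ((continuous_apply i).comp continuous_id.matrix_adjugate)
      exact (hcont.tendsto Θ).comp hMc
    have hMinv : Tendsto (fun t => (M t)⁻¹ i j) l (𝓝 (Θ⁻¹ i j)) := by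
      simp only [hinv_eq]
      exact (hdetc.inv₀ hΘdet0).mul hadjc
    have main : Tendsto (fun t => (((φ t * (A/(2*t)) : ℝ)) : ℂ) * (M t)⁻¹ i j) l
        (𝓝 (((ξ * 4⁻¹ : ℝ) : ℂ) * Θ⁻¹ i j)) :=
      ((Complex.continuous_ofReal.tendsto _).comp hsc).mul hMinv
    have htarget : ((((ξ/4 : ℝ) : ℂ)) • Θ⁻¹) i j = ((ξ * 4⁻¹ : ℝ) : ℂ) * Θ⁻¹ i j := by
      rw [Matrix.smul_apply, smul_eq_mul, div_eq_mul_inv]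
    rw [htarget]
    apply Tendsto.congr' ?_ main
    filter_upwards [hev] with t ht
    obtain ⟨hc', hHt⟩ := key t ht
    have hu : 0 < 2*A - t := by simp at ht; linarith [ht.2]
    have htpos : 0 < t := by simp at ht; linarith [ht.1]
    rw [hHt, hc', Matrix.smul_apply, smul_eq_mul, ← mul_assoc, ← Complex.ofReal_mul]
    congr 2
    rw [hr]
    have hu' : A*2 - t ≠ 0 := by rw [mul_comm]; exact hu.ne'
    field_simp
end
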